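/- For a finite directed graph G with source s and parameter f, the following are equivalent: (1) for every feasible f-local fault set F' with s ∉ F', the propagation closure starting from {s} ∪ (N⁺(s) − F') under the rule 'add any node outside F' with at least f+1 in-neighbors already added' eventually covers all of V − F'; (2) for every partition (F, L, R) of V with s ∈ L, R ≠ ∅, and F a feasible f-local fault set, either some node of R has at least f+1 in-neighbors in L, or R contains an out-neighbor of s. -/

import Mathlib

open Finset

variable {α : Type*}

/-- Incoming neighbors of `v` in the directed graph with edge relation `E`. -/
def inN [Fintype α] [DecidableEq α] (E : α → α → Prop) [DecidableRel E] (v : α) : Finset α :=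
  univ.filter (fun u => E u v)

/-- Outgoing neighbors of `v`. -/
def outN [Fintype α] [DecidableEq α] (E : α → α → Prop) [DecidableRel E] (v : α) : Finset α :=
  univ.filter (fun u => E v u)

/-- `F` is a feasible `f`-local fault set: every node outside `F` has at most `f`
incoming neighbors inside `F`. -/
def feasibleLocal [Fintype α] [DecidableEq α] (E : α → α → Prop) [DecidableRel E]
    (f : ℕ) (F : Finset α) : Prop :=
  ∀ v, v ∉ F → (inN E v ∩ F).card ≤ f

/-- The CPA graph condition: for every partition `(F, L, R)` of the vertex set with
`s ∈ L`, `R` nonempty and `F` a feasible `f`-local fault set, either some node of `R`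
has at least `f+1` in-neighbors in `L`, or `R` contains an out-neighbor of `s`. -/
def cpaCond [Fintype α] [DecidableEq α] (E : α → α → Prop) [DecidableRel E]
    (f : ℕ) (s : α) : Prop :=
  ∀ F L R : Finset α, Disjoint F L → Disjoint F R → Disjoint L R →
    F ∪ L ∪ R = univ → s ∈ L → R.Nonempty → feasibleLocal E f F →
    (∃ v ∈ R, f + 1 ≤ (inN E v ∩ L).card) ∨ (outN E s ∩ R).Nonempty

/-- CPA propagation sequence: `L₀ = {s} ∪ (N⁺(s) \ F')`,
`L_{k+1} = L_k ∪ { v ∈ V − F' − L_k : |N⁻(v) ∩ L_k| ≥ f+1 }`. -/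
def cpaSeq [Fintype α] [DecidableEq α] (E : α → α → Prop) [DecidableRel E]
    (f : ℕ) (s : α) (F' : Finset α) : ℕ → Finset α
  | 0 => insert s (outN E s \ F')
  | k + 1 => cpaSeq E f s F' k ∪
      ((univ \ F') \ cpaSeq E f s F' k).filter
        (fun v => f + 1 ≤ (inN E v ∩ cpaSeq E f s F' k).card)

/-! Read with `R = V − F − L`, condition (2) says that every set `L` disjoint from `F` and closed
under the CPA rule (`CpaClosed`) covers `V − F`. The propagation sequence lies inside every
closed set and is itself closed once it stabilises, which it must in a finite graph; so it is
the least closed set, and it covers `V − F` iff every closed set does. -/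

structure CpaClosed [Fintype α] [DecidableEq α] (E : α → α → Prop) [DecidableRel E]
    (f : ℕ) (s : α) (F L : Finset α) : Prop where
  source_mem : s ∈ L
  outN_sdiff_subset : outN E s \ F ⊆ L
  mem_of_le_card : ∀ v ∉ F, f + 1 ≤ (inN E v ∩ L).card → v ∈ L

section
variable [Fintype α] [DecidableEq α] (E : α → α → Prop) [DecidableRel E] (f : ℕ) (s : α)

lemma cpaCond_iff_forall_cpaClosed :
    cpaCond E f s ↔ ∀ F L : Finset α, feasibleLocal E f F → Disjoint F L →
      CpaClosed E f s F L → univ \ F ⊆ L := by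
  constructor
  · intro hcond F L hfeas hFL hL
    by_contra hnot
    obtain ⟨r, hr, hrL⟩ := not_subset.1 hnot
    have hrF : r ∉ F := (mem_sdiff.1 hr).2
    rcases hcond F L (univ \ (F ∪ L)) hFL (disjoint_sdiff.mono_left subset_union_left)
      (disjoint_sdiff.mono_left subset_union_right) (union_sdiff_of_subset (subset_univ _))
      hL.source_mem ⟨r, by simp [hrF, hrL]⟩ hfeas with
      ⟨v, hv, hcard⟩ | ⟨v, hv⟩
    · simp only [mem_sdiff, mem_union, mem_univ, true_and, not_or] at hv
      exact hv.2 (hL.mem_of_le_card v hv.1 hcard)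
    · simp only [mem_inter, mem_sdiff, mem_union, mem_univ, true_and, not_or] at hv
      exact hv.2.2 (hL.outN_sdiff_subset (mem_sdiff.2 ⟨hv.1, hv.2.1⟩))
  · intro hclosed F L R hFL hFR hLR hcover hs ⟨r, hr⟩ hfeas
    by_contra! hnot
    have hR : ∀ v ∉ F, v ∉ L → v ∈ R := fun v hvF hvL => by
      have := hcover ▸ mem_univ v
      simp only [mem_union] at this
      tauto
    have hL : CpaClosed E f s F L :=
      { source_mem := hs
        outN_sdiff_subset := fun v hv => by
          obtain ⟨hvs, hvF⟩ := mem_sdiff.1 hv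
          by_contra hvL
          exact notMem_empty v (hnot.2 ▸ mem_inter.2 ⟨hvs, hR v hvF hvL⟩)
        mem_of_le_card := fun v hvF hcard => by
          by_contra hvL
          exact (hnot.1 v (hR v hvF hvL)).not_ge hcard }
    have hrL := hclosed F L hfeas hFL hL (mem_sdiff.2 ⟨mem_univ r, disjoint_right.1 hFR hr⟩)
    exact disjoint_right.1 hLR hr hrL

lemma cpaSeq_mono (F : Finset α) : Monotone (cpaSeq E f s F) :=
  monotone_nat_of_le_succ fun _ => subset_union_left

lemma disjoint_cpaSeq {F : Finset α} (hs : s ∉ F) (k : ℕ) : Disjoint F (cpaSeq E f s F k) := by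
  induction k with
  | zero => simp [cpaSeq, hs, disjoint_sdiff]
  | succ k ih =>
    exact disjoint_union_right.2
      ⟨ih, disjoint_sdiff.mono_right ((filter_subset _ _).trans sdiff_subset)⟩

lemma exists_cpaSeq_succ_eq (F : Finset α) : ∃ K, cpaSeq E f s F (K + 1) = cpaSeq E f s F K := by
  obtain ⟨K, hK⟩ := WellFoundedGT.monotone_chain_condition ⟨_, cpaSeq_mono E f s F⟩
  exact ⟨K, (hK (K + 1) K.le_succ).symm⟩

lemma cpaClosed_cpaSeq_of_succ_eq {F : Finset α} {K : ℕ}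
    (hK : cpaSeq E f s F (K + 1) = cpaSeq E f s F K) : CpaClosed E f s F (cpaSeq E f s F K) where
  source_mem := cpaSeq_mono E f s F K.zero_le (mem_insert_self _ _)
  outN_sdiff_subset := (subset_insert _ _).trans (cpaSeq_mono E f s F K.zero_le)
  mem_of_le_card v hvF hcard := by
    by_contra hvK
    rw [← hK, cpaSeq] at hvK
    simp_all

lemma cpaSeq_subset_of_cpaClosed {F L : Finset α} (hL : CpaClosed E f s F L) (k : ℕ) :
    cpaSeq E f s F k ⊆ L := by
  induction k with
  | zero => exact insert_subset hL.source_mem hL.outN_sdiff_subset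
  | succ k ih =>
    refine union_subset ih fun v hv => ?_
    obtain ⟨hvF, -⟩ := mem_sdiff.1 (mem_filter.1 hv).1
    exact hL.mem_of_le_card v (mem_sdiff.1 hvF).2
      ((mem_filter.1 hv).2.trans (card_le_card (inter_subset_inter_left ih)))

end

theorem stmt5_general [Fintype α] [DecidableEq α] (E : α → α → Prop) [DecidableRel E]
    (f : ℕ) (s : α) :
    (∀ F' : Finset α, feasibleLocal E f F' → s ∉ F' →
        ∃ k, cpaSeq E f s F' k = univ \ F') ↔ cpaCond E f s := by
  rw [cpaCond_iff_forall_cpaClosed]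
  constructor
  · intro hprop F L hfeas hFL hL
    obtain ⟨k, hk⟩ := hprop F hfeas (disjoint_right.1 hFL hL.source_mem)
    exact hk ▸ cpaSeq_subset_of_cpaClosed E f s hL k
  · intro hclosed F hfeas hs
    obtain ⟨K, hK⟩ := exists_cpaSeq_succ_eq E f s F
    refine ⟨K, (subset_sdiff.2 ⟨subset_univ _, (disjoint_cpaSeq E f s hs K).symm⟩).antisymm ?_⟩
    exact hclosed F _ hfeas (disjoint_cpaSeq E f s hs K) (cpaClosed_cpaSeq_of_succ_eq E f s hK)

/-- equivalence of CPA propagation correctness and the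
Tseng–Vaidya–Bhandari topological condition. -/
theorem stmt5 [Fintype α] [DecidableEq α] (E : α → α → Prop) [DecidableRel E]
    (hirr : ∀ v, ¬ E v v) (f : ℕ) (s : α) :
    (∀ F' : Finset α, feasibleLocal E f F' → s ∉ F' →
        ∃ k, cpaSeq E f s F' k = univ \ F') ↔ cpaCond E f s :=
  stmt5_general E f s
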